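/- arXiv:2510.00789 — 4 statements merged into one kernel-verified Lean document; each statement's English description precedes it below -/
import Mathlib

section
/- Let C ≥ 1 and c̃ ≥ 1 be real numbers and set C̃ := 2 + max(log c̃, 2·log C). Then for every integer n ≥ 1 and all real numbers a, b with 0 < a ≤ c̃, 0 < b, and log b ≤ n·log C + log a, one has 1 + |log a| ≤ 2·C̃·n·(1 + |log b|). -/
theorem stmt_0 (C ctilde : ℝ) (hC : 1 ≤ C) (hct : 1 ≤ ctilde)
    (Ctilde : ℝ) (hCtilde : Ctilde = 2 + max (Real.log ctilde) (2 * Real.log C))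
    (n : ℕ) (hn : 1 ≤ n) (a b : ℝ)
    (ha0 : 0 < a) (hac : a ≤ ctilde) (hb0 : 0 < b)
    (hlog : Real.log b ≤ (n : ℝ) * Real.log C + Real.log a) :
    1 + |Real.log a| ≤ 2 * Ctilde * (n : ℝ) * (1 + |Real.log b|) := by
  have hlc : 0 ≤ Real.log C := Real.log_nonneg hC
  have hlct : 0 ≤ Real.log ctilde := Real.log_nonneg hct
  have h1 : Real.log ctilde ≤ Ctilde - 2 := by
    rw [hCtilde]; have := le_max_left (Real.log ctilde) (2 * Real.log C); linarith
  have h2 : 2 * Real.log C ≤ Ctilde - 2 := by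
    rw [hCtilde]; have := le_max_right (Real.log ctilde) (2 * Real.log C); linarith
  have hCt : 2 ≤ Ctilde := by linarith
  have hn1 : (1 : ℝ) ≤ (n : ℝ) := by exact_mod_cast hn
  have hLa : Real.log a ≤ Real.log ctilde := Real.log_le_log ha0 hac
  have hMb : 0 ≤ |Real.log b| := abs_nonneg _
  rcases le_or_gt 0 (Real.log a) with h | h
  · rw [abs_of_nonneg h]
    nlinarith [mul_nonneg (mul_nonneg (by linarith : (0:ℝ) ≤ 2 * Ctilde) (by linarith : (0:ℝ) ≤ (n:ℝ))) hMb, mul_le_mul_of_nonneg_left hn1 (by linarith : (0:ℝ) ≤ 2 * Ctilde)]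
  · rw [abs_of_neg h]
    have hnb : -|Real.log b| ≤ Real.log b := neg_abs_le _
    have key : -Real.log a ≤ (n : ℝ) * Real.log C + |Real.log b| := by linarith
    nlinarith [mul_nonneg (mul_nonneg (by linarith : (0:ℝ) ≤ 2 * Ctilde - 1) (by linarith : (0:ℝ) ≤ (n:ℝ))) hMb, mul_le_mul_of_nonneg_left h2 (by linarith : (0:ℝ) ≤ (n:ℝ)), mul_le_mul_of_nonneg_left hn1 (by linarith : (0:ℝ) ≤ Ctilde)]
end

section
/- Let (Y, d) be a metric space, let C ≥ 1, and let g : Y → Y satisfy d(g x, g y) ≤ C·d(x, y) for all x, y ∈ Y. Let q > 0 and M > 0, and let u : Y → ℝ be a function such that |u(a) − u(b)| ≤ M/(1 + |log d(a,b)|)^q for all a, b with 0 < d(a,b) < 1, and |u(a) − u(b)| ≤ M for all a, b ∈ Y. Set C̃ := 2 + 2·log C. Then for every integer n ≥ 1 and all x, y ∈ Y with 0 < d(x, y) < 1, one has |u(gⁿ x) − u(gⁿ y)| ≤ (2·C̃·n)^q · M/(1 + |log d(x,y)|)^q. -/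
lemma iter_lip_aux {Y : Type*} [MetricSpace Y] (C : ℝ) (hC : 0 ≤ C)
    (g : Y → Y) (hg : ∀ x y : Y, dist (g x) (g y) ≤ C * dist x y) (n : ℕ) :
    ∀ x y : Y, dist (g^[n] x) (g^[n] y) ≤ C ^ n * dist x y := by
  induction n with
  | zero => intro x y; simp
  | succ n ih =>
    intro x y
    rw [Function.iterate_succ_apply, Function.iterate_succ_apply]
    calc dist (g^[n] (g x)) (g^[n] (g y)) ≤ C ^ n * dist (g x) (g y) := ih _ _
      _ ≤ C ^ n * (C * dist x y) :=
        mul_le_mul_of_nonneg_left (hg x y) (pow_nonneg hC n)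
      _ = C ^ (n + 1) * dist x y := by ring

theorem stmt_1 {Y : Type*} [MetricSpace Y] (C : ℝ) (hC : 1 ≤ C)
    (g : Y → Y) (hg : ∀ x y : Y, dist (g x) (g y) ≤ C * dist x y)
    (q M : ℝ) (hq : 0 < q) (hM : 0 < M) (u : Y → ℝ)
    (hu : ∀ a b : Y, 0 < dist a b → dist a b < 1 →
      |u a - u b| ≤ M / (1 + |Real.log (dist a b)|) ^ q)
    (hubd : ∀ a b : Y, |u a - u b| ≤ M)
    (n : ℕ) (hn : 1 ≤ n) (x y : Y) (hd0 : 0 < dist x y) (hd1 : dist x y < 1) :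
    |u (g^[n] x) - u (g^[n] y)| ≤
      (2 * (2 + 2 * Real.log C) * (n : ℝ)) ^ q * M / (1 + |Real.log (dist x y)|) ^ q := by
  have hCpos : (0:ℝ) < C := lt_of_lt_of_le one_pos hC
  have hlogC : 0 ≤ Real.log C := Real.log_nonneg hC
  have hn1 : (1:ℝ) ≤ (n : ℝ) := by exact_mod_cast hn
  set K : ℝ := 2 * (2 + 2 * Real.log C) * (n : ℝ) with hKdef
  have hK4 : (4:ℝ) ≤ K := by
    have : (4:ℝ) * 1 ≤ (4 + 4 * Real.log C) * (n:ℝ) := by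
      apply mul_le_mul (by linarith) hn1 (by norm_num) (by linarith)
    calc (4:ℝ) = 4 * 1 := by ring
      _ ≤ (4 + 4 * Real.log C) * (n:ℝ) := this
      _ = K := by rw [hKdef]; ring
  set L : ℝ := 1 + |Real.log (dist x y)| with hLdef
  have hL1 : (1:ℝ) ≤ L := le_add_of_nonneg_right (abs_nonneg _)
  have hLpos : (0:ℝ) < L := lt_of_lt_of_le one_pos hL1
  have hLq : (0:ℝ) < L ^ q := Real.rpow_pos_of_pos hLpos q
  have hlt : Real.log (dist x y) < 0 := Real.log_neg hd0 hd1
  have habs : |Real.log (dist x y)| = -Real.log (dist x y) := abs_of_neg hlt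
  set D : ℝ := dist (g^[n] x) (g^[n] y) with hDdef
  have hDle : D ≤ C ^ n * dist x y :=
    iter_lip_aux C (le_of_lt hCpos) g hg n x y
  have hlogpow : Real.log (C ^ n * dist x y) = (n:ℝ) * Real.log C + Real.log (dist x y) := by
    rw [Real.log_mul (by positivity) (ne_of_gt hd0), Real.log_pow]
  rcases le_or_gt 1 D with hD1 | hD1
  · -- D ≥ 1 : use the uniform bound
    have h1 : (1:ℝ) ≤ C ^ n * dist x y := le_trans hD1 hDle
    have hlog1 : 0 ≤ (n:ℝ) * Real.log C + Real.log (dist x y) := by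
      rw [← hlogpow]
      exact Real.log_nonneg h1
    have hLK : L ≤ K := by
      rw [hLdef, habs, hKdef]
      nlinarith [mul_le_mul_of_nonneg_left hn1 hlogC]
    have hpow : L ^ q ≤ K ^ q :=
      Real.rpow_le_rpow (le_of_lt hLpos) hLK (le_of_lt hq)
    rw [le_div_iff₀ hLq]
    calc |u (g^[n] x) - u (g^[n] y)| * L ^ q ≤ M * L ^ q :=
          mul_le_mul_of_nonneg_right (hubd _ _) (le_of_lt hLq)
      _ ≤ M * K ^ q := mul_le_mul_of_nonneg_left hpow (le_of_lt hM)
      _ = K ^ q * M := by ring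
  · rcases eq_or_lt_of_le (dist_nonneg : (0:ℝ) ≤ D) with hD0 | hD0
    · -- D = 0 : the two images coincide
      have : g^[n] x = g^[n] y := by
        rw [← dist_eq_zero]; exact hD0.symm
      rw [this, sub_self, abs_zero]
      have hKq : (0:ℝ) ≤ K ^ q :=
        Real.rpow_nonneg (by linarith) q
      positivity
    · -- 0 < D < 1
      set P : ℝ := 1 + |Real.log D| with hPdef
      have hP1 : (1:ℝ) ≤ P := le_add_of_nonneg_right (abs_nonneg _)
      have hPpos : (0:ℝ) < P := lt_of_lt_of_le one_pos hP1
      have hlogD : Real.log D < 0 := Real.log_neg hD0 hD1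
      have habsD : |Real.log D| = -Real.log D := abs_of_neg hlogD
      have hloglog : Real.log D ≤ (n:ℝ) * Real.log C + Real.log (dist x y) := by
        rw [← hlogpow]
        exact Real.log_le_log hD0 hDle
      -- key : L ≤ K * P
      have hkey : L ≤ K * P := by
        have hPL : P ≥ L - (n:ℝ) * Real.log C := by
          rw [hPdef, habsD, hLdef, habs]; linarith
        rcases le_or_gt (2 * (n:ℝ) * Real.log C) L with hc | hc
        · -- L ≥ 2 n log C : L ≤ 2 P ≤ K P
          have h2P : L ≤ 2 * P := by linarith
          calc L ≤ 2 * P := h2P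
            _ ≤ K * P := mul_le_mul_of_nonneg_right (by linarith) (le_of_lt hPpos)
        · -- L < 2 n log C ≤ K ≤ K P
          have : L ≤ K := by
            rw [hKdef]; nlinarith
          calc L ≤ K := this
            _ = K * 1 := (mul_one K).symm
            _ ≤ K * P := mul_le_mul_of_nonneg_left hP1 (by linarith)
      have hpow : L ^ q ≤ K ^ q * P ^ q := by
        calc L ^ q ≤ (K * P) ^ q :=
              Real.rpow_le_rpow (le_of_lt hLpos) hkey (le_of_lt hq)
          _ = K ^ q * P ^ q := Real.mul_rpow (by linarith) (le_of_lt hPpos)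
      have hPq : (0:ℝ) < P ^ q := Real.rpow_pos_of_pos hPpos q
      have hbd : |u (g^[n] x) - u (g^[n] y)| ≤ M / P ^ q := hu _ _ hD0 hD1
      rw [le_div_iff₀ hLq]
      calc |u (g^[n] x) - u (g^[n] y)| * L ^ q
          ≤ (M / P ^ q) * L ^ q :=
            mul_le_mul_of_nonneg_right hbd (le_of_lt hLq)
        _ ≤ (M / P ^ q) * (K ^ q * P ^ q) :=
            mul_le_mul_of_nonneg_left hpow (by positivity)
        _ = K ^ q * M := by field_simp
end

section
/- Let (Y, d) be a metric space, let κ > 1 and C ≥ 1, and let T : Y → Y satisfy d(T x, T y) ≤ C·d(x, y)^{1/κ} for all x, y ∈ Y. Let q > 0 and M > 0, and let u : Y → ℝ be a function such that |u(a) − u(b)| ≤ M/(1 + |log d(a,b)|)^q for all a, b with 0 < d(a,b) < 1, and |u(a) − u(b)| ≤ M for all a, b ∈ Y. Then there exists a constant c > 0, depending only on q, κ and C, such that for every integer n ≥ 1 and all x, y ∈ Y with 0 < d(x, y) < 1, one has |u(Tⁿ x) − u(Tⁿ y)| ≤ c·κ^{n q}·M/(1 + |log d(x,y)|)^q. (One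 may take c = (2 + (2κ/(κ−1))·log C)^q.) -/
set_option maxHeartbeats 1600000 in
theorem stmt_3 {Y : Type*} [MetricSpace Y] (κ C : ℝ) (hκ : 1 < κ) (hC : 1 ≤ C)
    (T : Y → Y) (hT : ∀ x y : Y, dist (T x) (T y) ≤ C * dist x y ^ (1 / κ))
    (q M : ℝ) (hq : 0 < q) (hM : 0 < M) (u : Y → ℝ)
    (hu : ∀ a b : Y, 0 < dist a b → dist a b < 1 →
      |u a - u b| ≤ M / (1 + |Real.log (dist a b)|) ^ q)
    (hubd : ∀ a b : Y, |u a - u b| ≤ M) :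
    ∃ c : ℝ, 0 < c ∧ ∀ n : ℕ, 1 ≤ n → ∀ x y : Y, 0 < dist x y → dist x y < 1 →
      |u (T^[n] x) - u (T^[n] y)| ≤
        c * κ ^ ((n : ℝ) * q) * M / (1 + |Real.log (dist x y)|) ^ q := by
  have hκ0 : (0:ℝ) < κ := by linarith
  have hC0 : (0:ℝ) < C := by linarith
  set A : ℝ := C ^ (κ / (κ - 1)) with hAdef
  have hexp : 0 < κ / (κ - 1) := div_pos (by linarith) (by linarith)
  have hApos : 0 < A := Real.rpow_pos_of_pos hC0 _
  have hA1 : 1 ≤ A := Real.one_le_rpow hC hexp.le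
  set B : ℝ := Real.log A with hBdef
  have hB0 : 0 ≤ B := Real.log_nonneg hA1
  refine ⟨(2 + 2*B) ^ q, Real.rpow_pos_of_pos (by linarith) q, ?_⟩
  intro n hn x y hd0 hd1
  have key : ∀ m : ℕ, dist (T^[m] x) (T^[m] y) ≤ A * dist x y ^ ((1/κ)^m : ℝ) := by
    intro m
    induction m with
    | zero =>
        simp only [Function.iterate_zero_apply, pow_zero, Real.rpow_one]
        nlinarith [dist_nonneg (x := x) (y := y)]
    | succ m ih =>
        have h1 : dist (T^[m+1] x) (T^[m+1] y)
            ≤ C * dist (T^[m] x) (T^[m] y) ^ (1/κ) := by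
          rw [Function.iterate_succ_apply', Function.iterate_succ_apply']
          exact hT _ _
        have h2 : dist (T^[m] x) (T^[m] y) ^ ((1:ℝ)/κ)
            ≤ (A * dist x y ^ ((1/κ)^m : ℝ)) ^ ((1:ℝ)/κ) :=
          Real.rpow_le_rpow dist_nonneg ih (by positivity)
        have h3 : (A * dist x y ^ ((1/κ)^m : ℝ)) ^ ((1:ℝ)/κ)
            = A ^ ((1:ℝ)/κ) * dist x y ^ ((1/κ)^(m+1) : ℝ) := by
          rw [Real.mul_rpow hApos.le (Real.rpow_nonneg dist_nonneg _),
            ← Real.rpow_mul dist_nonneg, pow_succ]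
        have h4 : C * A ^ ((1:ℝ)/κ) = A := by
          rw [hAdef, ← Real.rpow_mul hC0.le]
          rw [show C * C ^ (κ / (κ - 1) * (1 / κ)) = C ^ (1:ℝ) * C ^ (κ / (κ - 1) * (1 / κ))
            by rw [Real.rpow_one], ← Real.rpow_add hC0]
          congr 1
          have hne : κ - 1 ≠ 0 := by intro h; rw [sub_eq_zero] at h; exact (lt_irrefl κ (h ▸ hκ)).elim
          field_simp
          ring
        calc dist (T^[m+1] x) (T^[m+1] y)
            ≤ C * dist (T^[m] x) (T^[m] y) ^ ((1:ℝ)/κ) := h1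
          _ ≤ C * (A * dist x y ^ ((1/κ)^m : ℝ)) ^ ((1:ℝ)/κ) :=
              mul_le_mul_of_nonneg_left h2 hC0.le
          _ = (C * A ^ ((1:ℝ)/κ)) * dist x y ^ ((1/κ)^(m+1) : ℝ) := by rw [h3]; ring
          _ = A * dist x y ^ ((1/κ)^(m+1) : ℝ) := by rw [h4]
  set δ := dist x y with hδ
  set L := |Real.log δ| with hL
  have hlogδ : Real.log δ < 0 := Real.log_neg hd0 hd1
  have hLpos : 0 < L := abs_pos.mpr hlogδ.ne
  have hLeq : Real.log δ = -L := by rw [hL, abs_of_neg hlogδ]; ring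
  set e : ℝ := (1/κ)^n with he
  have he0 : 0 < e := by positivity
  have he1 : e ≤ 1 := pow_le_one₀ (by positivity) (by rw [div_le_one hκ0]; linarith)
  set K : ℝ := κ ^ n with hK
  have hK1 : 1 ≤ K := one_le_pow₀ hκ.le
  have hKe : K * e = 1 := by
    rw [hK, he, ← mul_pow]
    rw [mul_one_div, div_self hκ0.ne']
    simp
  have hκpow : κ ^ ((n : ℝ) * q) = K ^ q := by
    rw [Real.rpow_mul hκ0.le, Real.rpow_natCast]
  set D := dist (T^[n] x) (T^[n] y) with hD
  have hkey : D ≤ A * δ ^ e := key n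
  rw [hκpow]
  by_cases hD0 : D = 0
  · have hxy : T^[n] x = T^[n] y := by rwa [← dist_eq_zero]
    rw [hxy, sub_self, abs_zero]
    positivity
  have hDpos : 0 < D := (dist_nonneg).lt_of_ne (Ne.symm hD0)
  have hlogD : Real.log D ≤ B + e * Real.log δ := by
    calc Real.log D ≤ Real.log (A * δ ^ e) := Real.log_le_log hDpos hkey
      _ = B + e * Real.log δ := by
          rw [Real.log_mul hApos.ne' (by positivity), Real.log_rpow hd0, hBdef]
  have bound : ∀ ℓ : ℝ, 0 ≤ ℓ → e * L - B ≤ ℓ → 1 + L ≤ (2 + 2*B) * K * (1 + ℓ) := by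
    intro ℓ hl0 hl
    by_cases hcase : e * L ≤ 2*B + 1
    · have h1 : L ≤ K * (2*B+1) := by
        calc L = K * (e * L) := by rw [← mul_assoc, hKe, one_mul]
          _ ≤ K * (2*B+1) := mul_le_mul_of_nonneg_left hcase (by linarith)
      nlinarith [mul_nonneg (mul_nonneg (by linarith : (0:ℝ) ≤ 2+2*B)
          (by linarith : (0:ℝ) ≤ K)) hl0,
        mul_nonneg hB0 (sub_nonneg.mpr hK1)]
    · push_neg at hcase
      have h2 : e * (1 + L) ≤ 2 * (1 + ℓ) := by nlinarith
      have h3 : K * (e * (1+L)) ≤ K * (2 * (1+ℓ)) :=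
        mul_le_mul_of_nonneg_left h2 (by linarith)
      rw [← mul_assoc, hKe, one_mul] at h3
      nlinarith [mul_nonneg hB0 (mul_nonneg (by linarith : (0:ℝ) ≤ K)
        (by linarith : (0:ℝ) ≤ 1+ℓ))]
  by_cases hD1 : D < 1
  · have hl := hu _ _ hDpos hD1
    have hlogDneg : Real.log D < 0 := Real.log_neg hDpos hD1
    have hℓ : e*L - B ≤ |Real.log D| := by
      rw [abs_of_neg hlogDneg]
      rw [hLeq] at hlogD
      linarith
    have hmain := bound _ (abs_nonneg _) hℓ
    calc |u (T^[n] x) - u (T^[n] y)| ≤ M / (1 + |Real.log D|) ^ q := hl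
      _ ≤ (2 + 2*B)^q * K^q * M / (1+L)^q := by
          have hp1 : (0:ℝ) < (1 + |Real.log D|) ^ q :=
            Real.rpow_pos_of_pos (by positivity) q
          have hp2 : (0:ℝ) < (1 + L) ^ q :=
            Real.rpow_pos_of_pos (by linarith) q
          rw [div_le_div_iff₀ hp1 hp2]
          have hstep : (1+L)^q ≤ ((2+2*B)*K*(1+|Real.log D|))^q :=
            Real.rpow_le_rpow (by linarith) hmain hq.le
          rw [Real.mul_rpow (by positivity) (by positivity),
            Real.mul_rpow (by linarith) (by positivity)] at hstep
          nlinarith [mul_le_mul_of_nonneg_left hstep hM.le]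
  · push_neg at hD1
    have hℓ : e*L - B ≤ 0 := by
      have := Real.log_nonneg hD1
      rw [hLeq] at hlogD
      linarith
    have hmain := bound 0 le_rfl hℓ
    calc |u (T^[n] x) - u (T^[n] y)| ≤ M := hubd _ _
      _ ≤ (2 + 2*B)^q * K^q * M / (1+L)^q := by
          have hp2 : (0:ℝ) < (1 + L) ^ q :=
            Real.rpow_pos_of_pos (by linarith) q
          rw [le_div_iff₀ hp2]
          have hstep : (1+L)^q ≤ ((2+2*B)*K)^q :=
            Real.rpow_le_rpow (by linarith) (by nlinarith) hq.le
          rw [Real.mul_rpow (by linarith) (by positivity)] at hstep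
          nlinarith [mul_le_mul_of_nonneg_left hstep hM.le]
end

section
/- Let q > 0, λ > 0, β > 0 and M ≥ 1 be real numbers, and let v : ℂ → ℝ be a measurable function such that (i) ∫_{{z : |z| ≤ 1}} exp(λ·|v(z)|) dA(z) ≤ β, where dA is Lebesgue measure on ℂ, and (ii) |v(0) − v(θ)| ≤ M/(1 + |log |θ||)^q for all θ ∈ ℂ with 0 < |θ| ≤ 1. Then, setting A := 1 + (2 + max(0, log(β/π)))/λ, one has |v(0)| ≤ A·(1 + M^{1/(q+1)}). -/
/-!
Put `t = M^{1/(q+1)}`, so that `M / t^q = t`. On the disk of radius `e^{-t}` one has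
`|log |θ|| ≥ t`, hence the modulus of continuity gives `|v θ| ≥ |v 0| - t` there. Comparing
the exponential integral with its value on that small disk, of area `π e^{-2t}`, yields
`λ (|v 0| - t) ≤ 2t + log (β/π)`, which rearranges to the claim.
-/

open MeasureTheory Metric Real

lemma div_rpow_one_div_add_one_rpow {M q : ℝ} (hM : 0 < M) (hq : q + 1 ≠ 0) :
    M / (M ^ (1 / (q + 1))) ^ q = M ^ (1 / (q + 1)) := by
  rw [div_eq_iff (rpow_pos_of_pos (rpow_pos_of_pos hM _) q).ne', ← rpow_mul hM.le,
    ← rpow_add hM, show 1 / (q + 1) + 1 / (q + 1) * q = 1 by field_simp; ring, rpow_one]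

lemma le_abs_log_of_le_exp_neg {x t : ℝ} (hx : 0 < x) (hxt : x ≤ exp (-t)) :
    t ≤ |log x| := by
  have : log x ≤ -t := (log_le_log hx hxt).trans_eq (log_exp _)
  linarith [neg_le_abs (log x)]

lemma abs_sub_le_of_norm_le_exp_neg {v : ℂ → ℝ} {q M t : ℝ} (hq : 0 ≤ q) (hM : 0 ≤ M)
    (ht : 0 ≤ t) (hmod : ∀ θ : ℂ, 0 < ‖θ‖ → ‖θ‖ ≤ 1 →
      |v 0 - v θ| ≤ M / (1 + |log ‖θ‖|) ^ q)
    {z : ℂ} (hz : ‖z‖ ≤ exp (-t)) :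
    |v 0 - v z| ≤ M / (1 + t) ^ q := by
  rcases eq_or_ne z 0 with rfl | hz0
  · simpa using div_nonneg hM (rpow_nonneg (by linarith) q)
  have hpos : 0 < ‖z‖ := norm_pos_iff.mpr hz0
  calc |v 0 - v z| ≤ M / (1 + |log ‖z‖|) ^ q :=
        hmod z hpos (hz.trans (exp_le_one_iff.mpr (by linarith)))
    _ ≤ M / (1 + t) ^ q := by
        gcongr
        exact le_abs_log_of_le_exp_neg hpos hz

lemma mul_pi_mul_sq_le_of_le_on_closedBall {g : ℂ → ℝ} {β c r : ℝ} (hβ : 0 ≤ β)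
    (hr₀ : 0 ≤ r) (hr₁ : r ≤ 1)
    (hint : ∫⁻ z in closedBall (0 : ℂ) 1, ENNReal.ofReal (g z) ≤ ENNReal.ofReal β)
    (hc : ∀ z ∈ closedBall (0 : ℂ) r, c ≤ g z) :
    c * (π * r ^ 2) ≤ β := by
  have hvol : volume (closedBall (0 : ℂ) r) = ENNReal.ofReal (π * r ^ 2) := by
    rw [Complex.volume_closedBall, ENNReal.ofReal_mul pi_pos.le, ENNReal.ofReal_pow hr₀,
      ← NNReal.coe_real_pi, ENNReal.ofReal_coe_nnreal, mul_comm]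
  rw [← ENNReal.ofReal_le_ofReal_iff hβ, ENNReal.ofReal_mul' (by positivity), ← hvol,
    ← setLIntegral_const]
  calc ∫⁻ _ in closedBall (0 : ℂ) r, ENNReal.ofReal c
      ≤ ∫⁻ z in closedBall (0 : ℂ) r, ENNReal.ofReal (g z) :=
        setLIntegral_mono' measurableSet_closedBall fun z hz =>
          ENNReal.ofReal_le_ofReal (hc z hz)
    _ ≤ ∫⁻ z in closedBall (0 : ℂ) 1, ENNReal.ofReal (g z) :=
        lintegral_mono_set (closedBall_subset_closedBall hr₁)
    _ ≤ ENNReal.ofReal β := hint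

lemma le_one_add_div_mul_one_add {x t lam L : ℝ} (hlam : 0 < lam) (ht : 0 ≤ t) (hL : 0 ≤ L)
    (h : lam * (x - t) ≤ 2 * t + L) :
    x ≤ (1 + (2 + L) / lam) * (1 + t) := by
  have hx : x - t ≤ (2 * t + L) / lam := by rw [le_div_iff₀ hlam]; linarith
  have hLt : (2 * t + L) / lam ≤ (2 + L) * (1 + t) / lam := by gcongr; nlinarith
  have : (1 + (2 + L) / lam) * (1 + t) = 1 + t + (2 + L) * (1 + t) / lam := by ring
  linarith

theorem stmt_11_general (q lam β M : ℝ) (hq : 0 < q) (hlam : 0 < lam) (hβ : 0 < β) (hM : 1 ≤ M)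
    (v : ℂ → ℝ)
    (hint : ∫⁻ z in Metric.closedBall (0 : ℂ) 1,
        ENNReal.ofReal (Real.exp (lam * |v z|)) ≤ ENNReal.ofReal β)
    (hmod : ∀ θ : ℂ, 0 < ‖θ‖ → ‖θ‖ ≤ 1 →
      |v 0 - v θ| ≤ M / (1 + |Real.log (‖θ‖)|) ^ q) :
    |v 0| ≤ (1 + (2 + max 0 (Real.log (β / Real.pi))) / lam) * (1 + M ^ (1 / (q + 1))) := by
  set t := M ^ (1 / (q + 1))
  have hM₀ : 0 < M := by linarith
  have ht : 0 < t := rpow_pos_of_pos hM₀ _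
  have hδ : M / (1 + t) ^ q ≤ t :=
    (div_le_div_of_nonneg_left hM₀.le (rpow_pos_of_pos ht q)
      (rpow_le_rpow ht.le (by linarith) hq.le)).trans_eq
      (div_rpow_one_div_add_one_rpow hM₀ (by linarith))
  have hlower : ∀ z ∈ closedBall (0 : ℂ) (exp (-t)),
      exp (lam * (|v 0| - t)) ≤ exp (lam * |v z|) := by
    intro z hz
    have hclose := abs_sub_le_of_norm_le_exp_neg hq.le hM₀.le ht.le hmod
      (mem_closedBall_zero_iff.mp hz)
    gcongr
    linarith [abs_sub_abs_le_abs_sub (v 0) (v z)]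
  have hmass := mul_pi_mul_sq_le_of_le_on_closedBall hβ.le (exp_pos _).le
    (exp_le_one_iff.mpr (by linarith)) hint hlower
  have hlog : lam * (|v 0| - t) - 2 * t ≤ log (β / π) := by
    rw [le_log_iff_exp_le (div_pos hβ pi_pos), le_div_iff₀ pi_pos]
    refine (Eq.le ?_).trans hmass
    rw [sub_eq_add_neg, exp_add, show -(2 * t) = -t + -t by ring, exp_add]
    ring
  exact le_one_add_div_mul_one_add hlam ht.le (le_max_left _ _)
    (by linarith [le_max_right 0 (log (β / π))])

theorem stmt_11 (q lam β M : ℝ) (hq : 0 < q) (hlam : 0 < lam) (hβ : 0 < β) (hM : 1 ≤ M)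
    (v : ℂ → ℝ) (hv : Measurable v)
    (hint : ∫⁻ z in Metric.closedBall (0 : ℂ) 1,
        ENNReal.ofReal (Real.exp (lam * |v z|)) ≤ ENNReal.ofReal β)
    (hmod : ∀ θ : ℂ, 0 < ‖θ‖ → ‖θ‖ ≤ 1 →
      |v 0 - v θ| ≤ M / (1 + |Real.log (‖θ‖)|) ^ q) :
    |v 0| ≤ (1 + (2 + max 0 (Real.log (β / Real.pi))) / lam) * (1 + M ^ (1 / (q + 1))) :=
  stmt_11_general q lam β M hq hlam hβ hM v hint hmod
end
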